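/- arXiv:math/0306125 — 2 statements merged into one kernel-verified Lean document; each statement's English description precedes it below -/
import Mathlib

section
/- Let J(x,t,s,u,v,q,z) = Σ x^{h(D)} t^{ih(D)} s^{fh(D)} u^{odr(D)} v^{er(D)} q^{μ(D)} z^{|D|}, summed over all nonempty Dyck words D, regarded as a formal power series, and set K = J(1,q,q,v,u,q,z) (note that u and v are interchanged). Then K satisfies uzK² − [1 − (u+v)z + uv(1−q)² z²]K + q²vz = 0, and (1 − xuz − uzK) · J(x,t,s,u,v,q,z) = uz[xts + (1 − xu(1−t)(1−s)z)K]. -/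
attribute [local instance] Classical.propDecidable

namespace DyckBij

/-- A word over `Bool` (`true` = up-step `u`, `false` = down-step `d`) is a Dyck word:
equally many `u`'s and `d`'s, and every prefix has at least as many `u`'s as `d`'s. -/
def IsDyck (w : List Bool) : Prop :=
  w.count false = w.count true ∧
    ∀ p : List Bool, p <+: w → p.count false ≤ p.count true

/-- `Matched w i j`: the `u` at (0-indexed) position `i` of `w` is matched (as in matched
parentheses) with the `d` at position `j`, i.e. `w = A u B d C` with `B` a Dyck word,
`|A| = i` and `j = i + |B| + 1`. -/
def Matched (w : List Bool) (i j : ℕ) : Prop :=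
  ∃ A B C : List Bool, IsDyck B ∧ w = A ++ true :: (B ++ false :: C) ∧
    A.length = i ∧ j = i + B.length + 1

/-- Positions `i` and `j` form a matched pair of steps of `w`. -/
def MatchPair (w : List Bool) (i j : ℕ) : Prop :=
  Matched w i j ∨ Matched w j i

/-- The 0-indexed reading order `σ^{(r)}` on a word of length `L`: the first `2r` positions
are read in order, and the remaining positions are read in zigzag
`2r, L-1, 2r+1, L-2, …` (0-indexed). For `r = 0` this is the zigzag order `σ`. -/
def zigR (r L p : ℕ) : ℕ :=
  if p < 2 * r then p
  else if p % 2 = 0 then p / 2 + r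
  else L + r - (p + 1) / 2

/-- The bijection `Ψ_r`: the `p`-th letter of `Ψ_r(w)` is `u` iff the match of the
`σ^{(r)}_p`-th step of `w` does not occur among the previously read steps
`σ^{(r)}_0, …, σ^{(r)}_{p-1}`. -/
noncomputable def psiR (r : ℕ) (w : List Bool) : List Bool :=
  List.ofFn fun p : Fin w.length =>
    if ∃ p' : ℕ, p' < (p : ℕ) ∧
        MatchPair w (zigR r w.length p') (zigR r w.length (p : ℕ))
    then false else true

/-- The bijection `Ψ = Ψ_0`. -/
noncomputable def psi : List Bool → List Bool := psiR 0

/-- Number of tunnels of `w` with `|A| = |C| + 2r` (midpoint at `x = n + r`),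
i.e. decompositions `w = A u B d C` with `B` a Dyck word; tunnels are indexed by `|A|`. -/
noncomputable def tunEq (r : ℕ) (w : List Bool) : ℕ :=
  {i : ℕ | ∃ A B C : List Bool, IsDyck B ∧ w = A ++ true :: (B ++ false :: C) ∧
    A.length = i ∧ A.length = C.length + 2 * r}.ncard

/-- Number of tunnels of `w` with `|A| > |C| + 2r` (midpoint in `x > n + r`). -/
noncomputable def tunGt (r : ℕ) (w : List Bool) : ℕ :=
  {i : ℕ | ∃ A B C : List Bool, IsDyck B ∧ w = A ++ true :: (B ++ false :: C) ∧
    A.length = i ∧ C.length + 2 * r < A.length}.ncard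

/-- Number of tunnels of `w` with `|A| ≤ |C| + 2r` (midpoint in `x ≤ n + r`). -/
noncomputable def tunLe (r : ℕ) (w : List Bool) : ℕ :=
  {i : ℕ | ∃ A B C : List Bool, IsDyck B ∧ w = A ++ true :: (B ++ false :: C) ∧
    A.length = i ∧ A.length ≤ C.length + 2 * r}.ncard

/-- Number of centered tunnels `ct(w)`. -/
noncomputable def ctun (w : List Bool) : ℕ := tunEq 0 w

/-- Number of right tunnels `rt(w)`. -/
noncomputable def rtun (w : List Bool) : ℕ := tunGt 0 w

/-- Number of left tunnels `lt(w)`: tunnels with `|A| < |C|`. -/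
noncomputable def ltun (w : List Bool) : ℕ :=
  {i : ℕ | ∃ A B C : List Bool, IsDyck B ∧ w = A ++ true :: (B ++ false :: C) ∧
    A.length = i ∧ A.length < C.length}.ncard

/-- Number of multitunnels of `w` with `|A| = |C| + 2r` (midpoint at `x = n + r`):
decompositions `w = A B C` with `B` a nonempty Dyck word, indexed by `(|A|, |B|)`. -/
noncomputable def mtunEq (r : ℕ) (w : List Bool) : ℕ :=
  {q : ℕ × ℕ | ∃ A B C : List Bool, IsDyck B ∧ B ≠ [] ∧ w = A ++ B ++ C ∧
    A.length = q.1 ∧ B.length = q.2 ∧ A.length = C.length + 2 * r}.ncard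

/-- Number of centered multitunnels `cmt(w)`. -/
noncomputable def cmtun (w : List Bool) : ℕ := mtunEq 0 w

/-- Number of hills `h(w)`: decompositions `w = X u d Y` with `X, Y` Dyck words. -/
noncomputable def numHills (w : List Bool) : ℕ :=
  {i : ℕ | ∃ X Y : List Bool, IsDyck X ∧ IsDyck Y ∧
    w = X ++ true :: false :: Y ∧ X.length = i}.ncard

/-- Number of hills of `w` lying in `x > 2r`, i.e. with `|X| ≥ 2r`. -/
noncomputable def numHillsAfter (r : ℕ) (w : List Bool) : ℕ :=
  {i : ℕ | ∃ X Y : List Bool, IsDyck X ∧ IsDyck Y ∧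
    w = X ++ true :: false :: Y ∧ X.length = i ∧ 2 * r ≤ X.length}.ncard

/-- Number of arches (equivalently, returns) `ret(w)`: decompositions
`w = X (u B d) Y` with `X, B, Y` Dyck words. -/
noncomputable def numArches (w : List Bool) : ℕ :=
  {i : ℕ | ∃ X B Y : List Bool, IsDyck X ∧ IsDyck B ∧ IsDyck Y ∧
    w = X ++ true :: (B ++ false :: Y) ∧ X.length = i}.ncard

/-- Number of arches of `w` lying in `x ≥ 2r`, i.e. with `|X| ≥ 2r`. -/
noncomputable def numArchesAfter (r : ℕ) (w : List Bool) : ℕ :=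
  {i : ℕ | ∃ X B Y : List Bool, IsDyck X ∧ IsDyck B ∧ IsDyck Y ∧
    w = X ++ true :: (B ++ false :: Y) ∧ X.length = i ∧ 2 * r ≤ X.length}.ncard

/-- Number of odd rises `odr(w)`: `u`-steps at odd 1-indexed positions
(even 0-indexed positions). -/
noncomputable def oddRises (w : List Bool) : ℕ :=
  {p : ℕ | p < w.length ∧ p % 2 = 0 ∧ w.getD p false = true}.ncard

/-- Number of even rises `er(w)`: `u`-steps at even 1-indexed positions
(odd 0-indexed positions). -/
noncomputable def evenRises (w : List Bool) : ℕ :=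
  {p : ℕ | p < w.length ∧ p % 2 = 1 ∧ w.getD p false = true}.ncard

/-- Number of odd rises of `w` at 1-indexed positions `> 2r`. -/
noncomputable def oddRisesAfter (r : ℕ) (w : List Bool) : ℕ :=
  {p : ℕ | p < w.length ∧ p % 2 = 0 ∧ 2 * r ≤ p ∧ w.getD p false = true}.ncard

/-- Number of even rises of `w` at 1-indexed positions `> 2r`. -/
noncomputable def evenRisesAfter (r : ℕ) (w : List Bool) : ℕ :=
  {p : ℕ | p < w.length ∧ p % 2 = 1 ∧ 2 * r ≤ p ∧ w.getD p false = true}.ncard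

/-- Number of `u`-steps of `w` at 1-indexed positions `≤ 2r`. -/
noncomputable def upstepsBefore (r : ℕ) (w : List Bool) : ℕ :=
  {p : ℕ | p < w.length ∧ p < 2 * r ∧ w.getD p false = true}.ncard

/-- Number of peaks of `w`: occurrences of the factor `u d`. -/
noncomputable def numPeaks (w : List Bool) : ℕ :=
  {i : ℕ | i + 2 ≤ w.length ∧ w.getD i false = true ∧ w.getD (i + 1) true = false}.ncard

/-- Number of occurrences in `w` of a factor of length 3 beginning with `u`
and ending with `d` (occurrences of `u⋆d`). -/
noncomputable def numUStarD (w : List Bool) : ℕ :=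
  {i : ℕ | i + 3 ≤ w.length ∧ w.getD i false = true ∧ w.getD (i + 2) true = false}.ncard

/-- `ih(w)`: 1 if `w` begins with the factor `u d`, else 0. -/
noncomputable def initHill (w : List Bool) : ℕ :=
  if w.take 2 = [true, false] then 1 else 0

/-- `fh(w)`: 1 if `w = X u d` with `X` a Dyck word, else 0. -/
noncomputable def finHill (w : List Bool) : ℕ :=
  if ∃ X : List Bool, IsDyck X ∧ w = X ++ [true, false] then 1 else 0

/-- `π` avoids the pattern 321. -/
def Avoids321 {n : ℕ} (π : Equiv.Perm (Fin n)) : Prop :=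
  ¬ ∃ i j k : Fin n, i < j ∧ j < k ∧ π k < π j ∧ π j < π i

/-- `π` avoids the pattern 132. -/
def Avoids132 {n : ℕ} (π : Equiv.Perm (Fin n)) : Prop :=
  ¬ ∃ i j k : Fin n, i < j ∧ j < k ∧ π i < π k ∧ π k < π j

/-- Number of fixed points of `π`. -/
noncomputable def fixedPts {n : ℕ} (π : Equiv.Perm (Fin n)) : ℕ :=
  {i : Fin n | π i = i}.ncard

/-- Number of excedances of `π`. -/
noncomputable def excedances {n : ℕ} (π : Equiv.Perm (Fin n)) : ℕ :=
  {i : Fin n | i < π i}.ncard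

/-- Number of descents of `π`. -/
noncomputable def descents {n : ℕ} (π : Equiv.Perm (Fin n)) : ℕ :=
  {i : ℕ | ∃ (h1 : i < n) (h2 : i + 1 < n), π ⟨i + 1, h2⟩ < π ⟨i, h1⟩}.ncard

/-- `α_r(π) = #{i : π(i) = i + r}` (stated 0-indexed, equivalent to the 1-indexed version). -/
noncomputable def alphaStat {n : ℕ} (r : ℕ) (π : Equiv.Perm (Fin n)) : ℕ :=
  {i : Fin n | (π i : ℕ) = (i : ℕ) + r}.ncard

/-- `β_r(π) = #{i : i > r, π(i) = i}` (for 1-indexed `i`; 0-indexed this is `r ≤ i`). -/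
noncomputable def betaStat {n : ℕ} (r : ℕ) (π : Equiv.Perm (Fin n)) : ℕ :=
  {i : Fin n | r ≤ (i : ℕ) ∧ π i = i}.ncard

/-- The polynomial variables: `x = X 0`, `t = X 1`, `s = X 2`, `u = X 3`, `v = X 4`,
`q = X 5`. -/
noncomputable def xP6 : MvPolynomial (Fin 6) ℚ := MvPolynomial.X 0
noncomputable def tP6 : MvPolynomial (Fin 6) ℚ := MvPolynomial.X 1
noncomputable def sP6 : MvPolynomial (Fin 6) ℚ := MvPolynomial.X 2
noncomputable def uP6 : MvPolynomial (Fin 6) ℚ := MvPolynomial.X 3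
noncomputable def vP6 : MvPolynomial (Fin 6) ℚ := MvPolynomial.X 4
noncomputable def qP6 : MvPolynomial (Fin 6) ℚ := MvPolynomial.X 5

/-- `J(a,b,c,d,e,g,z) = Σ a^{h(D)} b^{ih(D)} c^{fh(D)} d^{odr(D)} e^{er(D)} g^{μ(D)} z^{|D|}`,
summed over all nonempty Dyck words `D`. -/
noncomputable def Jser (a b c d e g : MvPolynomial (Fin 6) ℚ) :
    PowerSeries (MvPolynomial (Fin 6) ℚ) :=
  PowerSeries.mk fun n =>
    if n = 0 then 0
    else
      ∑ f : Fin (2 * n) → Bool,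
        if IsDyck (List.ofFn f) then
          a ^ numHills (List.ofFn f) * b ^ initHill (List.ofFn f) *
            c ^ finHill (List.ofFn f) * d ^ oddRises (List.ofFn f) *
            e ^ evenRises (List.ofFn f) * g ^ numUStarD (List.ofFn f)
        else 0

/-- `K = J(1,q,q,v,u,q,z)` (with `u` and `v` interchanged). -/
noncomputable def Kser : PowerSeries (MvPolynomial (Fin 6) ℚ) :=
  Jser 1 qP6 qP6 vP6 uP6 qP6

/-!
Every nonempty Dyck word factors uniquely as `D = u A d B` with `A`, `B` Dyck words (Mathlib's
`DyckWord.insidePart` and `DyckWord.outsidePart`), and all six statistics of `D` are read off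
from those of `A` and `B`: `D` has an initial hill iff `A` is empty, its other hills are those
of `B`, the odd and even rises of `A` trade places because `A` starts at an even position, and
`μ(D) = ih(A) + μ(A) + fh(A) + μ(B)`, the extra occurrences of `u⋆d` being `u·ud` when `A` begins
with a hill and `ud·d` when it ends with one. Summing over the factorization gives
`J(x,t,s,u,v,q) = uz [xt (s + J(x,1,s,u,v,q)) + J(1,q,q,v,u,q) (1 + J(x,1,s,u,v,q))]`,
and the second identity is a combination of two instances of it. The instances at
`(1,q,q,v,u,q)` and `(1,1,q,v,u,q)` give a relation between `K = J(1,q,q,v,u,q)` and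
`K' = J(1,q,q,u,v,q)`; eliminating `K'` between it and its image under `u ↔ v` leaves the
quadratic for `K` multiplied by the unit `1 - uvz²(1-q)²`.
-/

open DyckStep DyckWord Finset PowerSeries

def stepEquivBool : DyckStep ≃ Bool where
  toFun | U => true | D => false
  invFun | true => U | false => D
  left_inv s := by cases s <;> rfl
  right_inv b := by cases b <;> rfl

def toBools (p : DyckWord) : List Bool := p.toList.map stepEquivBool

lemma isDyck_iff_take {w : List Bool} : IsDyck w ↔
    w.count false = w.count true ∧ ∀ i, (w.take i).count false ≤ (w.take i).count true := by
  refine and_congr_right fun _ => ⟨fun h i => h _ (w.take_prefix i), fun h p hp => ?_⟩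
  rw [List.prefix_iff_eq_take.mp hp]
  exact h _

lemma isDyck_map_stepEquivBool_iff (l : List DyckStep) : IsDyck (l.map stepEquivBool) ↔
    l.count U = l.count D ∧ ∀ i, (l.take i).count D ≤ (l.take i).count U := by
  have hcount (s : DyckStep) (l : List DyckStep) :
      (l.map stepEquivBool).count (stepEquivBool s) = l.count s :=
    List.count_map_of_injective _ _ stepEquivBool.injective s
  rw [isDyck_iff_take, eq_comm]
  simp only [← List.map_take, show true = stepEquivBool U from rfl,
    show false = stepEquivBool D from rfl, hcount]

lemma isDyck_toBools (p : DyckWord) : IsDyck (toBools p) :=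
  (isDyck_map_stepEquivBool_iff _).2 ⟨p.count_U_eq_count_D, p.count_D_le_count_U⟩

lemma toBools_injective : Function.Injective toBools := fun _ _ h =>
  DyckWord.ext (List.map_injective_iff.2 stepEquivBool.injective h)

lemma isDyck_iff_exists_toBools {w : List Bool} : IsDyck w ↔ ∃ p, toBools p = w := by
  refine ⟨fun h => ?_, by rintro ⟨p, rfl⟩; exact isDyck_toBools p⟩
  have hw : (w.map stepEquivBool.symm).map stepEquivBool = w := by simp [List.map_map]
  rw [← hw, isDyck_map_stepEquivBool_iff] at h
  exact ⟨⟨_, h.1, h.2⟩, hw⟩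

@[simp] lemma toBools_zero : toBools 0 = [] := rfl

@[simp] lemma toBools_add (p q : DyckWord) : toBools (p + q) = toBools p ++ toBools q :=
  List.map_append ..

@[simp] lemma toBools_nest (p : DyckWord) : toBools p.nest = true :: toBools p ++ [false] := by
  simp [toBools, nest]
  exact ⟨rfl, rfl⟩

@[simp] lemma length_toBools (p : DyckWord) : (toBools p).length = 2 * p.semilength := by
  simp [toBools]

lemma toBools_nest_add (a b : DyckWord) :
    toBools (a.nest + b) = true :: (toBools a ++ false :: toBools b) := by
  simp

lemma even_length_toBools (p : DyckWord) : Even (toBools p).length := by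
  rw [length_toBools]
  exact even_two_mul _

lemma nest_add_inj {a b a' b' : DyckWord} : a.nest + b = a'.nest + b' ↔ a = a' ∧ b = b' := by
  refine ⟨fun h => ⟨?_, ?_⟩, by rintro ⟨rfl, rfl⟩; rfl⟩
  · simpa using congrArg insidePart h
  · simpa using congrArg outsidePart h

lemma exists_eq_nest_add {p : DyckWord} (h : p ≠ 0) : ∃ a b : DyckWord, p = a.nest + b :=
  ⟨_, _, (nest_insidePart_add_outsidePart h).symm⟩

lemma semilength_eq_zero_iff {p : DyckWord} : p.semilength = 0 ↔ p = 0 := by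
  rw [← DyckWord.toList_eq_nil, ← List.length_eq_zero_iff, ← two_mul_semilength_eq_length]
  omega

lemma exists_toBools_eq_true_cons {a : DyckWord} (ha : a ≠ 0) : ∃ t, toBools a = true :: t := by
  obtain ⟨a₁, a₂, rfl⟩ := exists_eq_nest_add ha
  exact ⟨_, toBools_nest_add ..⟩

lemma getLast?_toBools_ne_some_true (a : DyckWord) : (toBools a).getLast? ≠ some true := by
  rcases eq_or_ne a 0 with rfl | ha
  · simp
  · rw [toBools, List.getLast?_map, List.getLast?_eq_some_getLast (toList_ne_nil.2 ha),
      getLast_eq_D]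
    decide

def hillSet (p : DyckWord) : Set ℕ :=
  {i | ∃ x y : DyckWord, p = x + nest 0 + y ∧ 2 * x.semilength = i}

lemma numHills_toBools (p : DyckWord) : numHills (toBools p) = (hillSet p).ncard := by
  simp only [numHills, hillSet, isDyck_iff_exists_toBools]
  congr 1
  ext i
  constructor
  · rintro ⟨_, _, ⟨x, rfl⟩, ⟨y, rfl⟩, h, rfl⟩
    exact ⟨x, y, toBools_injective (by simpa using h), by simp⟩
  · rintro ⟨x, y, rfl, rfl⟩
    exact ⟨_, _, ⟨x, rfl⟩, ⟨y, rfl⟩, by simp, by simp⟩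

lemma hillSet_finite (p : DyckWord) : (hillSet p).Finite :=
  (Set.finite_Iic (2 * p.semilength)).subset <| by
    rintro _ ⟨x, y, rfl, rfl⟩
    simp only [semilength_add, Set.mem_Iic]
    omega

lemma hillSet_nest_add (a b : DyckWord) :
    hillSet (a.nest + b) = {i | a = 0 ∧ i = 0} ∪ (· + 2 * (a.semilength + 1)) '' hillSet b := by
  ext i
  simp only [hillSet, Set.mem_ofPred_eq, Set.mem_union, Set.mem_image]
  constructor
  · rintro ⟨x, y, h, rfl⟩
    rcases eq_or_ne x 0 with rfl | hx
    · rw [zero_add, nest_add_inj] at h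
      exact .inl ⟨h.1, by simp⟩
    · obtain ⟨x₁, x₂, rfl⟩ := exists_eq_nest_add hx
      rw [add_assoc, add_assoc, nest_add_inj] at h
      obtain ⟨rfl, rfl⟩ := h
      refine .inr ⟨_, ⟨x₂, y, by rw [add_assoc], rfl⟩, ?_⟩
      simp only [semilength_add, semilength_nest]
      ring
  · rintro (⟨rfl, rfl⟩ | ⟨_, ⟨x, y, rfl, rfl⟩, rfl⟩)
    · exact ⟨0, b, by simp, rfl⟩
    · refine ⟨a.nest + x, y, by simp only [add_assoc], ?_⟩
      simp only [semilength_add, semilength_nest]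
      ring

lemma numHills_nest_add (a b : DyckWord) :
    numHills (toBools (a.nest + b)) = (if a = 0 then 1 else 0) + numHills (toBools b) := by
  have hinj : Function.Injective (· + 2 * (a.semilength + 1)) := add_left_injective _
  rw [numHills_toBools, numHills_toBools, hillSet_nest_add]
  split_ifs with ha
  · have h0 : 0 ∉ (· + 2 * (a.semilength + 1)) '' hillSet b := by simp
    rw [show {i | a = 0 ∧ i = 0} = {0} by simp [ha], Set.singleton_union,
      Set.ncard_insert_of_notMem h0 ((hillSet_finite b).image _),
      Set.ncard_image_of_injective _ hinj, add_comm]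
  · simp [ha, Set.ncard_image_of_injective _ hinj]

lemma initHill_nest_add (a b : DyckWord) :
    initHill (toBools (a.nest + b)) = if a = 0 then 1 else 0 := by
  rcases eq_or_ne a 0 with rfl | ha
  · simp [initHill]
  · obtain ⟨a₁, a₂, rfl⟩ := exists_eq_nest_add ha
    simp [initHill]

lemma finHill_toBools_eq_ite_exists (p : DyckWord) :
    finHill (toBools p) = if ∃ x, p = x + nest 0 then 1 else 0 := by
  simp only [finHill, isDyck_iff_exists_toBools]
  congr 1
  refine propext ⟨?_, ?_⟩
  · rintro ⟨_, ⟨x, rfl⟩, h⟩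
    exact ⟨x, toBools_injective (by simpa using h)⟩
  · rintro ⟨x, rfl⟩
    exact ⟨_, ⟨x, rfl⟩, by simp⟩

lemma nest_add_eq_add_nest_zero_iff (a b : DyckWord) :
    (∃ x, a.nest + b = x + nest 0) ↔ (a = 0 ∧ b = 0) ∨ ∃ x, b = x + nest 0 := by
  constructor
  · rintro ⟨x, h⟩
    rcases eq_or_ne x 0 with rfl | hx
    · rw [zero_add, ← add_zero (nest 0), nest_add_inj] at h
      exact .inl h
    · obtain ⟨x₁, x₂, rfl⟩ := exists_eq_nest_add hx
      rw [add_assoc, nest_add_inj] at h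
      exact .inr ⟨x₂, h.2⟩
  · rintro (⟨rfl, rfl⟩ | ⟨x, rfl⟩)
    · exact ⟨0, by simp⟩
    · exact ⟨a.nest + x, (add_assoc ..).symm⟩

lemma finHill_nest_add (a b : DyckWord) :
    finHill (toBools (a.nest + b)) = if a = 0 ∧ b = 0 then 1 else finHill (toBools b) := by
  rw [finHill_toBools_eq_ite_exists, finHill_toBools_eq_ite_exists,
    nest_add_eq_add_nest_zero_iff]
  by_cases h : a = 0 ∧ b = 0 <;> simp [h]

lemma IsDyck.of_append_true_false {L : List Bool} (h : IsDyck (L ++ [true, false])) : IsDyck L :=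
  ⟨by simpa using h.1, fun p hp => h.2 p (hp.trans (List.prefix_append _ _))⟩

lemma finHill_toBools_eq_ite_getLast? (a : DyckWord) :
    finHill (toBools a) = if (toBools a).dropLast.getLast? = some true then 1 else 0 := by
  unfold finHill
  congr 1
  refine propext ⟨?_, fun h => ?_⟩
  · rintro ⟨X, -, hX⟩
    simp [hX]
  · have hlast : (toBools a).getLast? = some false := by
      cases hx : (toBools a).getLast? with
      | none => simp_all [List.getLast?_eq_none_iff]
      | some x => cases x <;> simp_all [getLast?_toBools_ne_some_true]
    have hA : toBools a = (toBools a).dropLast.dropLast ++ [true, false] := by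
      conv_lhs => rw [← List.dropLast_append_getLast? _ hlast, ← List.dropLast_append_getLast? _ h]
      simp
    exact ⟨_, IsDyck.of_append_true_false (hA ▸ isDyck_toBools a), hA⟩

lemma ncard_lt_and_eq_sum (n : ℕ) (P : ℕ → Prop) [DecidablePred P] :
    {i | i < n ∧ P i}.ncard = ∑ i ∈ range n, if P i then 1 else 0 := by
  rw [← card_filter, ← Set.ncard_coe_finset]
  congr 1
  ext
  simp

lemma oddRises_eq_sum (w : List Bool) :
    oddRises w = ∑ i ∈ range w.length, if i % 2 = 0 ∧ w.getD i false = true then 1 else 0 :=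
  ncard_lt_and_eq_sum ..

lemma evenRises_eq_sum (w : List Bool) :
    evenRises w = ∑ i ∈ range w.length, if i % 2 = 1 ∧ w.getD i false = true then 1 else 0 :=
  ncard_lt_and_eq_sum ..

lemma oddRises_cons (x : Bool) (w : List Bool) :
    oddRises (x :: w) = (if x then 1 else 0) + evenRises w := by
  rw [oddRises_eq_sum, evenRises_eq_sum, List.length_cons, sum_range_succ', add_comm]
  simp [Nat.succ_mod_two_eq_zero_iff]

lemma evenRises_cons (x : Bool) (w : List Bool) : evenRises (x :: w) = oddRises w := by
  rw [oddRises_eq_sum, evenRises_eq_sum, List.length_cons, sum_range_succ']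
  simp [Nat.succ_mod_two_eq_one_iff]

lemma rises_append {l : List Bool} (hl : Even l.length) (r : List Bool) :
    oddRises (l ++ r) = oddRises l + oddRises r ∧
      evenRises (l ++ r) = evenRises l + evenRises r := by
  obtain ⟨k, hk⟩ := hl
  simp only [oddRises_eq_sum, evenRises_eq_sum, List.length_append, sum_range_add]
  constructor <;> congr 1 <;> refine sum_congr rfl fun i hi => ?_ <;> rw [mem_range] at hi
  all_goals first
    | rw [List.getD_append _ _ _ _ hi]
    | rw [List.getD_append_right _ _ _ _ (by omega), Nat.add_sub_cancel_left,
        show (l.length + i) % 2 = i % 2 by omega]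

lemma oddRises_nest_add (a b : DyckWord) :
    oddRises (toBools (a.nest + b)) = 1 + evenRises (toBools a) + oddRises (toBools b) := by
  rw [toBools_nest_add, oddRises_cons, (rises_append (even_length_toBools a) _).2,
    evenRises_cons, if_pos rfl, add_assoc]

lemma evenRises_nest_add (a b : DyckWord) :
    evenRises (toBools (a.nest + b)) = oddRises (toBools a) + evenRises (toBools b) := by
  rw [toBools_nest_add, evenRises_cons, (rises_append (even_length_toBools a) _).1, oddRises_cons]
  simp

lemma numUStarD_eq_sum (w : List Bool) :
    numUStarD w = ∑ i ∈ range w.length,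
      if w.getD i false = true ∧ w.getD (i + 2) true = false then 1 else 0 := by
  rw [← ncard_lt_and_eq_sum, numUStarD]
  congr 1
  ext i
  simp only [Set.mem_ofPred_eq]
  constructor
  · rintro ⟨hi, h⟩
    exact ⟨by omega, h⟩
  · rintro ⟨-, h₁, h₂⟩
    refine ⟨?_, h₁, h₂⟩
    by_contra hi
    rw [List.getD_eq_default _ _ (by omega)] at h₂
    exact Bool.noConfusion h₂

lemma numUStarD_cons (x : Bool) (w : List Bool) :
    numUStarD (x :: w) = (if x = true ∧ w.getD 1 true = false then 1 else 0) + numUStarD w := by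
  rw [numUStarD_eq_sum, numUStarD_eq_sum, List.length_cons, sum_range_succ', add_comm]
  simp

lemma numUStarD_append (l r : List Bool) :
    numUStarD (l ++ r) = numUStarD l + numUStarD r
      + (if l.dropLast.getLast? = some true ∧ r.getD 0 true = false then 1 else 0)
      + (if l.getLast? = some true ∧ r.getD 1 true = false then 1 else 0) := by
  induction l with
  | nil => simp [numUStarD_eq_sum]
  | cons x l ih =>
    rw [List.cons_append, numUStarD_cons, numUStarD_cons, ih]
    rcases l with _ | ⟨y, _ | ⟨z, l⟩⟩ <;> simp [numUStarD_eq_sum] <;> omega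

lemma numUStarD_nest_add (a b : DyckWord) :
    numUStarD (toBools (a.nest + b)) = initHill (toBools a) + numUStarD (toBools a)
      + finHill (toBools a) + numUStarD (toBools b) := by
  have hb : (toBools b).getD 0 true = true := by
    rcases eq_or_ne b 0 with rfl | hb
    · rfl
    · obtain ⟨t, ht⟩ := exists_toBools_eq_true_cons hb
      simp [ht]
  have hinit : (if (toBools a ++ false :: toBools b).getD 1 true = false then 1 else 0)
      = initHill (toBools a) := by
    rcases eq_or_ne a 0 with rfl | ha
    · simp only [toBools_zero, List.nil_append, List.getD_cons_succ, hb]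
      simp [initHill]
    · obtain ⟨a₁, a₂, rfl⟩ := exists_eq_nest_add ha
      rw [initHill_nest_add, toBools_nest_add]
      rcases eq_or_ne a₁ 0 with rfl | ha₁
      · simp
      · obtain ⟨t, ht⟩ := exists_toBools_eq_true_cons ha₁
        simp [ht, ha₁]
  rw [toBools_nest_add, numUStarD_cons, numUStarD_append, numUStarD_cons,
    finHill_toBools_eq_ite_getLast?]
  simp only [getLast?_toBools_ne_some_true, Bool.false_eq_true, false_and, if_false, true_and,
    List.getD_cons_zero, and_true, hinit]
  ring

@[simp] lemma numHills_nil : numHills [] = 0 := by simp [numHills]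
@[simp] lemma initHill_nil : initHill [] = 0 := rfl
@[simp] lemma finHill_nil : finHill [] = 0 := by simp [finHill]
@[simp] lemma oddRises_nil : oddRises [] = 0 := by simp [oddRises]
@[simp] lemma evenRises_nil : evenRises [] = 0 := by simp [evenRises]
@[simp] lemma numUStarD_nil : numUStarD [] = 0 := by simp [numUStarD]

section Weight

variable {M : Type*} [CommMonoid M]

noncomputable def dyckWeight (x t s u v q : M) (w : List Bool) : M :=
  x ^ numHills w * t ^ initHill w * s ^ finHill w * u ^ oddRises w * v ^ evenRises w *
    q ^ numUStarD w

@[simp] lemma dyckWeight_nil (x t s u v q : M) : dyckWeight x t s u v q [] = 1 := by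
  simp [dyckWeight]

lemma dyckWeight_nest_add (x t s u v q : M) (a b : DyckWord) :
    dyckWeight x t s u v q (toBools (a.nest + b)) = u *
      if a = 0 then x * t * (if b = 0 then s else dyckWeight x 1 s u v q (toBools b))
      else dyckWeight 1 q q v u q (toBools a) * dyckWeight x 1 s u v q (toBools b) := by
  rw [dyckWeight, numHills_nest_add, initHill_nest_add, finHill_nest_add, oddRises_nest_add,
    evenRises_nest_add, numUStarD_nest_add]
  rcases eq_or_ne a 0 with rfl | ha <;> rcases eq_or_ne b 0 with rfl | hb <;>
    simp [dyckWeight, *, pow_add] <;> ac_rfl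

end Weight

section Series

variable {R : Type*} [CommSemiring R]

noncomputable def dyckSeries (f : DyckWord → R) : PowerSeries R :=
  PowerSeries.mk fun n => ∑ p : {p : DyckWord // p.semilength = n}, f p

lemma coeff_dyckSeries (f : DyckWord → R) (n : ℕ) :
    coeff n (dyckSeries f) = ∑ p : {p : DyckWord // p.semilength = n}, f p :=
  coeff_mk ..

lemma dyckSeries_add (f g : DyckWord → R) :
    dyckSeries (fun p => f p + g p) = dyckSeries f + dyckSeries g := by
  ext n
  simp [coeff_dyckSeries, sum_add_distrib]

lemma dyckSeries_const_mul (r : R) (f : DyckWord → R) :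
    dyckSeries (fun p => r * f p) = C r * dyckSeries f := by
  ext n
  simp [coeff_dyckSeries, coeff_C_mul, mul_sum]

lemma dyckSeries_ite_zero (r : R) (f : DyckWord → R) :
    dyckSeries (fun p => if p = 0 then r else f p)
      = C r + dyckSeries (fun p => if p = 0 then 0 else f p) := by
  ext n
  simp only [coeff_dyckSeries, map_add, coeff_C]
  rcases n with _ | n
  · have h (p : {p : DyckWord // p.semilength = 0}) : p.1 = 0 := semilength_eq_zero_iff.1 p.2
    simp [h, card_dyckWord_semilength_eq_catalan]
  · have h (p : {p : DyckWord // p.semilength = n + 1}) : p.1 ≠ 0 := fun hp => by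
      simpa [hp] using p.2
    simp [h]

def firstReturnEquiv (n : ℕ) : {p : DyckWord // p.semilength = n + 1} ≃
    Σ ij : antidiagonal n,
      {a : DyckWord // a.semilength = ij.1.1} × {b : DyckWord // b.semilength = ij.1.2} where
  toFun p := ⟨⟨(p.1.insidePart.semilength, p.1.outsidePart.semilength), by
      have := semilength_insidePart_add_semilength_outsidePart_add_one (p := p.1)
        (by rintro h; simpa [h] using p.2)
      rw [HasAntidiagonal.mem_antidiagonal]
      omega⟩, ⟨_, rfl⟩, ⟨_, rfl⟩⟩
  invFun σ := ⟨σ.2.1.1.nest + σ.2.2.1, by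
    have := HasAntidiagonal.mem_antidiagonal.1 σ.1.2
    simp only [semilength_add, semilength_nest, σ.2.1.2, σ.2.2.2]
    omega⟩
  left_inv p := Subtype.ext (nest_insidePart_add_outsidePart (by rintro h; simpa [h] using p.2))
  right_inv := by
    rintro ⟨⟨⟨i, j⟩, hij⟩, ⟨a, ha⟩, ⟨b, hb⟩⟩
    obtain rfl : a.semilength = i := ha
    obtain rfl : b.semilength = j := hb
    -- the two sides differ only through `insidePart (a.nest + b) = a` in a dependent position
    have key (a' b' : DyckWord) (h) (ha : a' = a) (hb : b' = b) :
        (⟨⟨(a'.semilength, b'.semilength), h⟩, ⟨a', rfl⟩, ⟨b', rfl⟩⟩ : Σ ij : antidiagonal n,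
          {a : DyckWord // a.semilength = ij.1.1} × {b : DyckWord // b.semilength = ij.1.2})
          = ⟨⟨_, hij⟩, ⟨a, rfl⟩, ⟨b, rfl⟩⟩ := by
      subst ha hb
      rfl
    exact key _ _ _ (by simp) (by simp)

lemma dyckSeries_first_return (f g : DyckWord → R) :
    dyckSeries (fun p => if p = 0 then 0 else f p.insidePart * g p.outsidePart)
      = X * dyckSeries f * dyckSeries g := by
  ext n
  rcases n with _ | n
  · have h (p : {p : DyckWord // p.semilength = 0}) : p.1 = 0 := semilength_eq_zero_iff.1 p.2
    simp [coeff_dyckSeries, h]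
  · rw [coeff_dyckSeries, mul_assoc, coeff_succ_X_mul, coeff_mul,
      Fintype.sum_equiv (firstReturnEquiv n) _ (fun σ => f σ.2.1 * g σ.2.2), Fintype.sum_sigma,
      ← sum_coe_sort (antidiagonal n)]
    · refine sum_congr rfl fun ij _ => ?_
      rw [coeff_dyckSeries, coeff_dyckSeries, sum_mul_sum, Fintype.sum_prod_type]
    · intro p
      exact if_neg fun hp => by simpa [hp] using p.2

end Series

lemma sum_ofFn_isDyck {R : Type*} [AddCommMonoid R] (W : List Bool → R) (n : ℕ) :
    ∑ f : Fin (2 * n) → Bool, (if IsDyck (List.ofFn f) then W (List.ofFn f) else 0)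
      = ∑ p : {p : DyckWord // p.semilength = n}, W (toBools p) := by
  rw [← sum_filter, ← sum_image (g := List.ofFn) (fun _ _ _ _ h => List.ofFn_injective h),
    ← sum_image (s := univ) (g := fun p : {p : DyckWord // p.semilength = n} => toBools p)
      (fun p _ q _ h => Subtype.ext (toBools_injective h))]
  congr 1
  ext w
  simp only [mem_image, mem_filter, mem_univ, true_and, Subtype.exists, exists_prop]
  constructor
  · rintro ⟨f, hf, rfl⟩
    obtain ⟨p, hp⟩ := isDyck_iff_exists_toBools.1 hf
    refine ⟨p, ?_, hp⟩
    have := congrArg List.length hp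
    simp only [length_toBools, List.length_ofFn] at this
    omega
  · rintro ⟨p, rfl, rfl⟩
    have hw : List.ofFn (fun i : Fin (2 * p.semilength) => (toBools p)[i.1]'(by
        rw [length_toBools]; exact i.2)) = toBools p :=
      List.ext_getElem (by simp) (by simp)
    exact ⟨_, hw.symm ▸ isDyck_toBools p, hw⟩

section Jser

variable (x t s u v q : MvPolynomial (Fin 6) ℚ)

lemma Jser_eq_dyckSeries :
    Jser x t s u v q
      = dyckSeries fun p => if p = 0 then 0 else dyckWeight x t s u v q (toBools p) := by
  refine PowerSeries.ext fun n => ?_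
  rw [Jser, coeff_mk, coeff_dyckSeries]
  split_ifs with hn
  · subst hn
    have h (p : {p : DyckWord // p.semilength = 0}) : p.1 = 0 := semilength_eq_zero_iff.1 p.2
    simp [h]
  · have h (p : {p : DyckWord // p.semilength = n}) : p.1 ≠ 0 := fun hp =>
      hn (by simpa [hp] using p.2.symm)
    simp only [h, if_false]
    exact sum_ofFn_isDyck (dyckWeight x t s u v q) n

theorem Jser_first_return :
    Jser x t s u v q = C u * X * (C (x * t) * (C s + Jser x 1 s u v q)
      + Jser 1 q q v u q * (1 + Jser x 1 s u v q)) := by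
  -- the first summand collects the words whose first arch is a hill
  have hsplit : (fun p : DyckWord => if p = 0 then 0 else dyckWeight x t s u v q (toBools p))
      = fun p => u * ((if p = 0 then 0 else
            (if p.insidePart = 0 then x * t else 0)
              * (if p.outsidePart = 0 then s else dyckWeight x 1 s u v q (toBools p.outsidePart)))
          + (if p = 0 then 0 else
            (if p.insidePart = 0 then 0 else dyckWeight 1 q q v u q (toBools p.insidePart))
              * dyckWeight x 1 s u v q (toBools p.outsidePart))) := by
    funext p
    rcases eq_or_ne p 0 with rfl | hp
    · simp
    · obtain ⟨a, b, rfl⟩ := exists_eq_nest_add hp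
      rw [dyckWeight_nest_add]
      split_ifs <;> simp_all
  have hxt : dyckSeries (fun a => if a = 0 then x * t else 0) = C (x * t) := by
    rw [dyckSeries_ite_zero, add_eq_left]
    refine PowerSeries.ext fun n => ?_
    simp [coeff_dyckSeries]
  have hJs : dyckSeries (fun b => if b = 0 then s else dyckWeight x 1 s u v q (toBools b))
      = C s + Jser x 1 s u v q := by
    rw [dyckSeries_ite_zero, Jser_eq_dyckSeries]
  have hJ1 : dyckSeries (fun b => dyckWeight x 1 s u v q (toBools b)) = 1 + Jser x 1 s u v q := by
    have : (fun b => dyckWeight x 1 s u v q (toBools b))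
        = fun b => if b = 0 then 1 else dyckWeight x 1 s u v q (toBools b) := by
      funext b
      split_ifs with hb <;> simp [hb]
    rw [this, dyckSeries_ite_zero, map_one, Jser_eq_dyckSeries]
  rw [Jser_eq_dyckSeries, hsplit, dyckSeries_const_mul, dyckSeries_add,
    dyckSeries_first_return (fun a => if a = 0 then x * t else 0)
      (fun b => if b = 0 then s else dyckWeight x 1 s u v q (toBools b)),
    dyckSeries_first_return (fun a => if a = 0 then 0 else dyckWeight 1 q q v u q (toBools a))
      (fun b => dyckWeight x 1 s u v q (toBools b)),
    hxt, hJs, hJ1, ← Jser_eq_dyckSeries]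
  ring

lemma Jser_swap_relation :
    Jser 1 q q v u q * (1 - C v * X) - C q ^ 2 * C v * X
      = C v * X * Jser 1 q q u v q * (1 + Jser 1 q q v u q - (1 - C q) ^ 2 * C v * X) := by
  have hK := Jser_first_return 1 q q v u q
  have hL := Jser_first_return 1 1 q v u q
  simp only [one_mul, map_one] at hK hL
  linear_combination (1 - C v * X - C v * X * Jser 1 q q u v q) * hK
    + (C v * X * C q + C v * X * Jser 1 q q u v q) * hL

lemma Jser_quadratic :
    C u * X * Jser 1 q q v u q ^ 2
      - (1 - (C u + C v) * X + C u * C v * (1 - C q) ^ 2 * X ^ 2) * Jser 1 q q v u q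
      + C q ^ 2 * C v * X = 0 := by
  have hvu := Jser_swap_relation u v q
  have huv := Jser_swap_relation v u q
  have hunit : (1 - C v * X * (C u * X) * (1 - C q) ^ 2 : PowerSeries (MvPolynomial (Fin 6) ℚ))
      ≠ 0 := fun h => by simpa using congrArg constantCoeff h
  refine (mul_eq_zero.1 ?_).resolve_left hunit
  linear_combination (-(1 - C u * X - C u * X * Jser 1 q q v u q)) * hvu
    + (-(C v * X * (1 + Jser 1 q q v u q - (1 - C q) ^ 2 * (C v * X)))) * huv

lemma Jser_linear_relation :
    (1 - C x * C u * X - C u * X * Jser 1 q q v u q) * Jser x t s u v q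
      = C u * X * (C x * C t * C s
        + (1 - C x * C u * (1 - C t) * (1 - C s) * X) * Jser 1 q q v u q) := by
  have hJ := Jser_first_return x t s u v q
  have hJ1 := Jser_first_return x 1 s u v q
  simp only [map_mul, mul_one] at hJ hJ1
  linear_combination (1 - C x * C u * X - C u * X * Jser 1 q q v u q) * hJ
    + (C u * X * (C x * C t + Jser 1 q q v u q)) * hJ1

end Jser

/-- `K` satisfies `uzK² − [1 − (u+v)z + uv(1−q)²z²]K + q²vz = 0`, and
`(1 − xuz − uzK)·J(x,t,s,u,v,q,z) = uz[xts + (1 − xu(1−t)(1−s)z)K]`. -/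
theorem Jser_eq :
    (PowerSeries.C (R := MvPolynomial (Fin 6) ℚ) uP6 * PowerSeries.X * Kser ^ 2
        - (1 - (PowerSeries.C (R := MvPolynomial (Fin 6) ℚ) uP6
              + PowerSeries.C (R := MvPolynomial (Fin 6) ℚ) vP6) * PowerSeries.X
            + PowerSeries.C (R := MvPolynomial (Fin 6) ℚ) uP6
              * PowerSeries.C (R := MvPolynomial (Fin 6) ℚ) vP6
              * (1 - PowerSeries.C (R := MvPolynomial (Fin 6) ℚ) qP6) ^ 2
              * PowerSeries.X ^ 2) * Kser
        + PowerSeries.C (R := MvPolynomial (Fin 6) ℚ) qP6 ^ 2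
          * PowerSeries.C (R := MvPolynomial (Fin 6) ℚ) vP6 * PowerSeries.X = 0) ∧
    (1 - PowerSeries.C (R := MvPolynomial (Fin 6) ℚ) xP6
          * PowerSeries.C (R := MvPolynomial (Fin 6) ℚ) uP6 * PowerSeries.X
        - PowerSeries.C (R := MvPolynomial (Fin 6) ℚ) uP6 * PowerSeries.X * Kser)
        * Jser xP6 tP6 sP6 uP6 vP6 qP6
      = PowerSeries.C (R := MvPolynomial (Fin 6) ℚ) uP6 * PowerSeries.X
        * (PowerSeries.C (R := MvPolynomial (Fin 6) ℚ) xP6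
            * PowerSeries.C (R := MvPolynomial (Fin 6) ℚ) tP6
            * PowerSeries.C (R := MvPolynomial (Fin 6) ℚ) sP6
          + (1 - PowerSeries.C (R := MvPolynomial (Fin 6) ℚ) xP6
              * PowerSeries.C (R := MvPolynomial (Fin 6) ℚ) uP6
              * (1 - PowerSeries.C (R := MvPolynomial (Fin 6) ℚ) tP6)
              * (1 - PowerSeries.C (R := MvPolynomial (Fin 6) ℚ) sP6) * PowerSeries.X) * Kser) :=
  ⟨Jser_quadratic uP6 vP6 qP6, Jser_linear_relation xP6 tP6 sP6 uP6 vP6 qP6⟩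

end DyckBij
end

section
/- For every Dyck word D, the number of peaks of D (occurrences of the factor ud in D) equals the number of occurrences of a factor of length 3 beginning with u and ending with d (occurrences of u⋆d) in the word Ψ(D)d, i.e., in Ψ(D) followed by one extra letter d. -/
attribute [local instance] Classical.propDecidable

namespace DyckBij

/-!
Read the steps of `D` (of length `L`) in the zigzag order; `Ψ(D)` has a `u` at time `t` exactly
when the step read at time `t` is read before its partner. The steps not yet read at any time
form an interval. Two adjacent positions `q, q + 1` are read at times `t` and `t + 2`, with
`t = 2q` in the left half and `t = 2L - 2q - 3` in the right half; the central pair is read at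
times `L - 2` and `L - 1`, and there the appended `d` plays the role of the letter at time `L`.
So `Ψ(D)d` has `u⋆d` at `t` iff the partner of the first step read is still unread at time `t`
while the partner of the second was read before time `t + 2`. As matchings do not cross, this
happens iff the two steps are matched to each other, i.e. `D` has a peak at `q`; and `q ↦ t` is
a bijection from the positions `q < L - 1` onto the times `t < L - 1`.
-/

def height (l : List Bool) : ℤ := l.count true - l.count false

@[simp] lemma height_nil : height [] = 0 := rfl

@[simp] lemma height_cons (b : Bool) (l : List Bool) :
    height (b :: l) = (if b then 1 else -1) + height l := by
  cases b <;> simp [height] <;> ring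

@[simp] lemma height_append (l l' : List Bool) : height (l ++ l') = height l + height l' := by
  simp only [height, List.count_append]; push_cast; ring

lemma height_take_succ {w : List Bool} {k : ℕ} (hk : k < w.length) :
    height (w.take (k + 1)) = height (w.take k) + height [w.getD k false] := by
  rw [List.take_add_one, List.getElem?_eq_getElem hk, List.getD_eq_getElem _ _ hk,
    Option.toList_some, height_append]

lemma height_take_succ_of_getD_true {w : List Bool} {k : ℕ} (hk : k < w.length)
    (h : w.getD k false = true) : height (w.take (k + 1)) = height (w.take k) + 1 := by
  rw [height_take_succ hk, h]
  rfl

lemma height_take_succ_of_getD_false {w : List Bool} {k : ℕ} (hk : k < w.length)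
    (h : w.getD k false = false) : height (w.take (k + 1)) = height (w.take k) - 1 := by
  rw [height_take_succ hk, h]
  rfl

lemma isDyck_iff_height {w : List Bool} :
    IsDyck w ↔ height w = 0 ∧ ∀ k, 0 ≤ height (w.take k) := by
  refine ⟨fun ⟨hcount, hpre⟩ => ⟨?_, fun k => ?_⟩, fun ⟨hheight, htake⟩ => ⟨?_, fun p hp => ?_⟩⟩
  · simp [height, hcount]
  · have := hpre _ (List.take_prefix k w)
    simp only [height]; omega
  · simp only [height] at hheight; omega
  · have := htake p.length
    rw [← List.prefix_iff_eq_take.mp hp] at this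
    simp only [height] at this; omega

lemma IsDyck.height_eq_zero {w : List Bool} (hw : IsDyck w) : height w = 0 :=
  (isDyck_iff_height.mp hw).1

lemma IsDyck.height_take_nonneg {w : List Bool} (hw : IsDyck w) (k : ℕ) : 0 ≤ height (w.take k) :=
  (isDyck_iff_height.mp hw).2 k

lemma IsDyck.even_length {w : List Bool} (hw : IsDyck w) : Even w.length := by
  rw [← List.count_false_add_count_true, hw.1]
  exact ⟨_, rfl⟩

lemma getD_eq_true_iff_height_take_lt {w : List Bool} {k : ℕ} (hk : k < w.length) :
    w.getD k false = true ↔ height (w.take k) < height (w.take (k + 1)) := by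
  cases h : w.getD k false
  · simp [height_take_succ_of_getD_false hk h]
  · simp [height_take_succ_of_getD_true hk h]

lemma getD_eq_false_iff_height_take_lt {w : List Bool} {k : ℕ} (hk : k < w.length) :
    w.getD k false = false ↔ height (w.take (k + 1)) < height (w.take k) := by
  cases h : w.getD k false
  · simp [height_take_succ_of_getD_false hk h]
  · simp [height_take_succ_of_getD_true hk h]

lemma abs_height_take_succ_sub_le (w : List Bool) (k : ℕ) :
    |height (w.take (k + 1)) - height (w.take k)| ≤ 1 := by
  rcases lt_or_ge k w.length with hk | hk
  · cases h : w.getD k false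
    · simp [height_take_succ_of_getD_false hk h]
    · simp [height_take_succ_of_getD_true hk h]
  · simp [List.take_of_length_le hk, List.take_of_length_le (hk.trans k.le_succ)]

lemma Matched.height_take {w : List Bool} {a b : ℕ} (h : Matched w a b) :
    a < b ∧ b < w.length ∧ height (w.take (b + 1)) = height (w.take a) ∧
      ∀ t, a < t → t ≤ b → height (w.take a) < height (w.take t) := by
  obtain ⟨A, B, C, hB, rfl, rfl, rfl⟩ := h
  have htake (k : ℕ) : (A ++ true :: (B ++ false :: C)).take (A.length + 1 + k)
      = A ++ true :: (B ++ false :: C).take k := by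
    rw [List.take_append, List.take_of_length_le (by omega),
      show A.length + 1 + k - A.length = k + 1 by omega]
    rfl
  refine ⟨by omega, by simp only [List.length_append, List.length_cons]; omega, ?_,
    fun t h1 h2 => ?_⟩
  · rw [show A.length + B.length + 1 + 1 = A.length + 1 + (B.length + 1) by ring, htake]
    simp [List.take_append, List.take_of_length_le, hB.height_eq_zero]
  · obtain ⟨k, rfl⟩ : ∃ k, t = A.length + 1 + k := ⟨t - A.length - 1, by omega⟩
    rw [htake, List.take_append_of_le_length (l₁ := B) (by omega)]
    simp only [List.take_left', height_append, height_cons, ↓reduceIte, lt_add_iff_pos_right]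
    linarith [hB.height_take_nonneg k]

lemma eq_take_append_cons_append_cons {w : List Bool} {a b : ℕ} (hab : a < b)
    (hb : b < w.length) (ha : w.getD a false = true) (hb' : w.getD b false = false) :
    w = w.take a ++ true :: ((w.drop (a + 1)).take (b - (a + 1)) ++ false :: w.drop (b + 1)) := by
  have hdrop_a : w.drop a = true :: w.drop (a + 1) := by
    rw [List.drop_eq_getElem_cons (hab.trans hb), ← List.getD_eq_getElem _ false, ha]
  have hdrop_b : w.drop b = false :: w.drop (b + 1) := by
    rw [List.drop_eq_getElem_cons hb, ← List.getD_eq_getElem _ false hb, hb']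
  have hsplit : (w.drop (a + 1)).take (b - (a + 1)) ++ w.drop b = w.drop (a + 1) := by
    rw [show w.drop b = (w.drop (a + 1)).drop (b - (a + 1)) by rw [List.drop_drop]; congr 1; omega,
      List.take_append_drop]
  calc w = w.take a ++ w.drop a := (List.take_append_drop a w).symm
    _ = w.take a ++ true :: ((w.drop (a + 1)).take (b - (a + 1)) ++ w.drop b) := by
      rw [hdrop_a, hsplit]
    _ = _ := by rw [hdrop_b]

lemma matched_of_height_take {w : List Bool} {a b : ℕ} (hab : a < b) (hb : b < w.length)
    (hret : height (w.take (b + 1)) = height (w.take a))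
    (hpos : ∀ t, a < t → t ≤ b → height (w.take a) < height (w.take t)) : Matched w a b := by
  have ha : a < w.length := by omega
  have hup : w.getD a false = true :=
    (getD_eq_true_iff_height_take_lt ha).2 (hpos (a + 1) (by omega) (by omega))
  have hdown : w.getD b false = false :=
    (getD_eq_false_iff_height_take_lt hb).2 (hret ▸ hpos b hab le_rfl)
  have hstep_a := height_take_succ_of_getD_true ha hup
  have hstep_b := height_take_succ_of_getD_false hb hdown
  set B := (w.drop (a + 1)).take (b - (a + 1)) with hBdef
  have hheightB (k : ℕ) : height (B.take k)
      = height (w.take (a + 1 + min k (b - (a + 1)))) - height (w.take (a + 1)) := by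
    rw [hBdef, List.take_take, List.take_add, height_append]
    ring
  have hB : IsDyck B := by
    rw [isDyck_iff_height]
    refine ⟨?_, fun k => ?_⟩
    · have := hheightB (b - (a + 1))
      rw [List.take_of_length_le (by simp [hBdef]), min_self,
        show a + 1 + (b - (a + 1)) = b by omega] at this
      omega
    · have := hpos (a + 1 + min k (b - (a + 1))) (by omega) (by omega)
      rw [hheightB k]
      omega
  refine ⟨w.take a, B, w.drop (b + 1), hB, eq_take_append_cons_append_cons hab hb hup hdown,
    by simp only [List.length_take]; omega,
    by simp only [hBdef, List.length_take, List.length_drop]; omega⟩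

lemma matched_iff {w : List Bool} {a b : ℕ} :
    Matched w a b ↔ a < b ∧ b < w.length ∧ height (w.take (b + 1)) = height (w.take a) ∧
      ∀ t, a < t → t ≤ b → height (w.take a) < height (w.take t) :=
  ⟨Matched.height_take, fun ⟨hab, hb, hret, hpos⟩ => matched_of_height_take hab hb hret hpos⟩

lemma matched_succ_iff {w : List Bool} {j : ℕ} :
    Matched w j (j + 1) ↔
      j + 2 ≤ w.length ∧ w.getD j false = true ∧ w.getD (j + 1) true = false := by
  have hdefault (hj : j + 1 < w.length) : w.getD (j + 1) true = w.getD (j + 1) false := by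
    rw [List.getD_eq_getElem _ _ hj, List.getD_eq_getElem _ _ hj]
  rw [matched_iff]
  constructor
  · rintro ⟨-, hlt, hret, hpos⟩
    have hrise := hpos (j + 1) (by omega) le_rfl
    refine ⟨hlt, (getD_eq_true_iff_height_take_lt (by omega)).2 hrise, ?_⟩
    rw [hdefault hlt, getD_eq_false_iff_height_take_lt hlt]
    linarith
  · rintro ⟨hlen, hup, hdown⟩
    rw [hdefault (by omega)] at hdown
    have h1 := height_take_succ_of_getD_true (by omega) hup
    have h2 := height_take_succ_of_getD_false (by omega) hdown
    refine ⟨by omega, by omega, by linarith, fun t ht1 ht2 => ?_⟩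
    obtain rfl : t = j + 1 := by omega
    linarith

namespace Matched

variable {w : List Bool} {a b c d : ℕ}

lemma lt (h : Matched w a b) : a < b := h.height_take.1

lemma lt_length (h : Matched w a b) : b < w.length := h.height_take.2.1

lemma right_unique (h : Matched w a b) (h' : Matched w a c) : b = c := by
  rw [matched_iff] at h h'
  rcases lt_trichotomy b c with hlt | heq | hgt
  · linarith [h'.2.2.2 (b + 1) (by omega) (by omega), h.2.2.1]
  · exact heq
  · linarith [h.2.2.2 (c + 1) (by omega) (by omega), h'.2.2.1]

lemma left_unique (h : Matched w a c) (h' : Matched w b c) : a = b := by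
  rw [matched_iff] at h h'
  rcases lt_trichotomy a b with hlt | heq | hgt
  · linarith [h.2.2.2 b hlt (by omega), h.2.2.1, h'.2.2.1]
  · exact heq
  · linarith [h'.2.2.2 a hgt (by omega), h.2.2.1, h'.2.2.1]

lemma not_matched_right (h : Matched w a b) : ¬ Matched w c a := by
  intro h'
  rw [matched_iff] at h h'
  linarith [h.2.2.2 (a + 1) (by omega) (by omega), h'.2.2.2 a h'.1 le_rfl, h'.2.2.1]

lemma not_cross (h : Matched w a c) (h' : Matched w b d) (hab : a < b) (hbc : b < c)
    (hcd : c < d) : False := by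
  rw [matched_iff] at h h'
  linarith [h.2.2.2 b hab hbc.le, h'.2.2.2 (c + 1) (by omega) (by omega), h.2.2.1]

end Matched

namespace IsDyck

variable {w : List Bool} (hw : IsDyck w) {i : ℕ}
include hw

lemma exists_matched_of_getD_true (hi : i < w.length) (hup : w.getD i false = true) :
    ∃ j, Matched w i j := by
  have hrise := height_take_succ_of_getD_true hi hup
  have hex : ∃ t, i < t ∧ height (w.take t) ≤ height (w.take i) :=
    ⟨w.length, hi, by rw [List.take_length, hw.height_eq_zero]; exact hw.height_take_nonneg i⟩
  obtain ⟨t, ⟨hit, hret⟩, hbelow⟩ : ∃ t, (i < t ∧ height (w.take t) ≤ height (w.take i)) ∧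
      ∀ s, i < s → s < t → height (w.take i) < height (w.take s) :=
    ⟨Nat.find hex, Nat.find_spec hex, fun s h1 h2 => not_le.mp fun h => Nat.find_min hex h2 ⟨h1, h⟩⟩
  have htL : t ≤ w.length := by
    by_contra h
    have := hbelow w.length hi (by omega)
    rw [List.take_length, hw.height_eq_zero] at this
    linarith [hw.height_take_nonneg i]
  have hti : i + 1 < t := by
    by_contra h
    rw [show t = i + 1 by omega] at hret
    linarith
  -- the path falls by at most one per step, so its first return to its level is exact
  have hfall := abs_le.mp (abs_height_take_succ_sub_le w (t - 1))
  rw [Nat.sub_add_cancel (by omega)] at hfall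
  have hprev := hbelow (t - 1) (by omega) (by omega)
  refine ⟨t - 1, matched_iff.2 ⟨by omega, by omega, ?_, fun s h1 h2 => hbelow s h1 (by omega)⟩⟩
  rw [Nat.sub_add_cancel (by omega)]
  linarith

lemma exists_matched_of_getD_false (hi : i < w.length) (hdown : w.getD i false = false) :
    ∃ j, Matched w j i := by
  have hfall := height_take_succ_of_getD_false hi hdown
  -- the matching `u` starts the last visit before `i` to the level reached after step `i`
  obtain ⟨s, hsi, hs, habove⟩ : ∃ s, s ≤ i ∧ height (w.take s) ≤ height (w.take (i + 1)) ∧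
      ∀ t, s < t → t ≤ i → height (w.take (i + 1)) < height (w.take t) :=
    ⟨_, Nat.findGreatest_le i,
      Nat.findGreatest_spec (P := fun s => height (w.take s) ≤ height (w.take (i + 1)))
        (Nat.zero_le i) (by simpa using hw.height_take_nonneg (i + 1)),
      fun t h1 h2 => not_le.mp (Nat.findGreatest_is_greatest h1 h2)⟩
  replace hsi : s < i := by
    rcases hsi.lt_or_eq with h | rfl
    · exact h
    · linarith
  have hrise := abs_le.mp (abs_height_take_succ_sub_le w s)
  have hnext := habove (s + 1) (by omega) (by omega)
  refine ⟨s, matched_iff.2 ⟨hsi, hi, by linarith, fun t h1 h2 => ?_⟩⟩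
  linarith [habove t h1 h2]

lemma exists_matchPair {q : ℕ} (hq : q < w.length) : ∃ j, MatchPair w q j := by
  cases h : w.getD q false
  · obtain ⟨j, hj⟩ := hw.exists_matched_of_getD_false hq h
    exact ⟨j, Or.inr hj⟩
  · obtain ⟨j, hj⟩ := hw.exists_matched_of_getD_true hq h
    exact ⟨j, Or.inl hj⟩

end IsDyck

namespace MatchPair

variable {w : List Bool} {a b c : ℕ}

lemma unique (h : MatchPair w a b) (h' : MatchPair w a c) : b = c := by
  rcases h with h | h <;> rcases h' with h' | h'
  · exact h.right_unique h'
  · exact (h.not_matched_right h').elim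
  · exact (h'.not_matched_right h).elim
  · exact h.left_unique h'

lemma ne (h : MatchPair w a b) : a ≠ b := by
  rcases h with h | h
  · exact h.lt.ne
  · exact h.lt.ne'

lemma lt_length (h : MatchPair w a b) : b < w.length := by
  rcases h with h | h
  · exact h.lt_length
  · exact h.lt.trans h.lt_length

lemma symm (h : MatchPair w a b) : MatchPair w b a :=
  Or.symm h

lemma matched_of_lt (h : MatchPair w a b) (hab : a < b) : Matched w a b :=
  h.resolve_right fun h' => absurd h'.lt (not_lt.mpr hab.le)

lemma matched_of_gt (h : MatchPair w a b) (hba : b < a) : Matched w b a :=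
  h.resolve_left fun h' => absurd h'.lt (not_lt.mpr hba.le)

end MatchPair

/-- The position matched with `q`; a junk value if `q` is out of range. -/
noncomputable def partner (w : List Bool) (q : ℕ) : ℕ := Classical.epsilon (MatchPair w q)

lemma partner_eq_of_matchPair {w : List Bool} {q j : ℕ} (h : MatchPair w q j) :
    partner w q = j :=
  (Classical.epsilon_spec ⟨j, h⟩).unique h

namespace IsDyck

variable {w : List Bool} (hw : IsDyck w)
include hw

lemma matchPair_partner {q : ℕ} (hq : q < w.length) : MatchPair w q (partner w q) :=
  Classical.epsilon_spec (hw.exists_matchPair hq)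

lemma partner_mem_Ioo {a b c : ℕ} (h : Matched w a c) (hab : a < b) (hbc : b < c) :
    partner w b ∈ Set.Ioo a c := by
  have hb := hbc.trans h.lt_length
  rcases hw.matchPair_partner hb with h' | h'
  · refine ⟨hab.trans h'.lt, lt_of_le_of_ne (not_lt.mp fun hcp => h.not_cross h' hab hbc hcp) ?_⟩
    rintro hpc
    rw [hpc] at h'
    exact hab.ne (h.left_unique h')
  · refine ⟨lt_of_le_of_ne (not_lt.mp fun hpa => h'.not_cross h hpa hab hbc) ?_, h'.lt.trans hbc⟩
    rintro hap
    rw [← hap] at h'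
    exact hbc.ne (h'.right_unique h)

lemma matched_succ_iff_partner_mem_Ioc {q R : ℕ} (hq : q + 1 < w.length) (hR : q + 1 ≤ R) :
    Matched w q (q + 1) ↔
      partner w q ∈ Set.Ioc q R ∧ partner w (q + 1) ∉ Set.Ioo q R := by
  constructor
  · intro h
    rw [partner_eq_of_matchPair (Or.inl h), partner_eq_of_matchPair (Or.inr h)]
    simp only [Set.mem_Ioc, Set.mem_Ioo]
    omega
  · rintro ⟨⟨hqx, hxR⟩, hout⟩
    have hx := (hw.matchPair_partner (by omega : q < w.length)).matched_of_lt hqx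
    rcases (Nat.succ_le_of_lt hqx).lt_or_eq with hlt | heq
    · have hin := hw.partner_mem_Ioo hx (Nat.lt_succ_self q) hlt
      exact (hout ⟨hin.1, hin.2.trans_le hxR⟩).elim
    · rwa [← heq] at hx

lemma matched_succ_iff_partner_mem_Ico {q l : ℕ} (hq : q + 1 < w.length) (hl : l ≤ q) :
    Matched w q (q + 1) ↔
      partner w (q + 1) ∈ Set.Ico l (q + 1) ∧ partner w q ∉ Set.Ioo l (q + 1) := by
  constructor
  · intro h
    rw [partner_eq_of_matchPair (Or.inl h), partner_eq_of_matchPair (Or.inr h)]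
    simp only [Set.mem_Ico, Set.mem_Ioo]
    omega
  · rintro ⟨⟨hlx, hxq⟩, hout⟩
    have hx := (hw.matchPair_partner hq).matched_of_gt hxq
    rcases (Nat.le_of_lt_succ hxq).lt_or_eq with hlt | heq
    · have hin := hw.partner_mem_Ioo hx hlt (Nat.lt_succ_self q)
      exact (hout ⟨hlx.trans_lt hin.1, hin.2⟩).elim
    · rwa [heq] at hx

end IsDyck

/-- The time at which position `q` of a word of length `L` is read in the zigzag order,
i.e. the inverse of `zigR 0 L`. -/
def readTime (L q : ℕ) : ℕ := if 2 * q < L then 2 * q else 2 * L - (2 * q + 1)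

section readTime

variable {L p q x : ℕ}

lemma zigR_zero_readTime (hq : q < L) : zigR 0 L (readTime L q) = q := by
  unfold zigR readTime
  split_ifs <;> omega

lemma readTime_zigR_zero (hL : Even L) (hp : p < L) : readTime L (zigR 0 L p) = p := by
  obtain ⟨n, rfl⟩ := hL
  unfold zigR readTime
  split_ifs <;> omega

lemma readTime_of_two_mul_lt (hq : 2 * q < L) : readTime L q = 2 * q := if_pos hq

lemma readTime_of_le_two_mul (hq : L ≤ 2 * q) : readTime L q = 2 * L - (2 * q + 1) :=
  if_neg hq.not_gt

lemma readTime_lt (hq : q < L) : readTime L q < L := by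
  unfold readTime
  split_ifs <;> omega

lemma readTime_injOn (L : ℕ) : Set.InjOn (readTime L) (Set.Iio L) := fun a ha b hb h => by
  rw [← zigR_zero_readTime (Set.mem_Iio.mp ha), h, zigR_zero_readTime (Set.mem_Iio.mp hb)]

lemma readTime_lt_readTime_iff_mem_Ioc (hq : 2 * q < L) (hx : x < L) :
    readTime L q < readTime L x ↔ x ∈ Set.Ioc q (L - 1 - q) := by
  simp only [Set.mem_Ioc, readTime]
  split_ifs <;> omega

lemma readTime_lt_readTime_succ_iff_notMem_Ioo (hq : 2 * q + 2 < L) (hx : x < L) :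
    readTime L x < readTime L (q + 1) ↔ x ∉ Set.Ioo q (L - 1 - q) := by
  simp only [Set.mem_Ioo, readTime]
  split_ifs <;> omega

lemma readTime_succ_lt_readTime_iff_mem_Ico (hq : L ≤ 2 * q) (hqL : q + 1 < L) (hx : x < L) :
    readTime L (q + 1) < readTime L x ↔ x ∈ Set.Ico (L - 1 - q) (q + 1) := by
  simp only [Set.mem_Ico, readTime]
  split_ifs <;> omega

lemma readTime_lt_readTime_iff_notMem_Ioo (hq : L ≤ 2 * q) (hqL : q < L) (hx : x < L) :
    readTime L x < readTime L q ↔ x ∉ Set.Ioo (L - 1 - q) (q + 1) := by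
  simp only [Set.mem_Ioo, readTime]
  split_ifs <;> omega

end readTime

lemma length_psi (w : List Bool) : (psi w).length = w.length := by
  simp [psi, psiR]

lemma getD_psi {w : List Bool} {p : ℕ} (hp : p < w.length) (d : Bool) :
    (psi w).getD p d =
      !decide (∃ p' < p, MatchPair w (zigR 0 w.length p') (zigR 0 w.length p)) := by
  rw [List.getD_eq_getElem _ _ (by rwa [length_psi])]
  simp [psi, psiR]

lemma getD_psi_append_of_lt {w : List Bool} {p : ℕ} (hp : p < w.length) (d : Bool) :
    (psi w ++ [false]).getD p d = (psi w).getD p d :=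
  List.getD_append _ _ _ _ (by rwa [length_psi])

lemma getD_psi_append_length (w : List Bool) (d : Bool) :
    (psi w ++ [false]).getD w.length d = false := by
  rw [List.getD_append_right _ _ _ _ (by rw [length_psi]), length_psi]
  simp

namespace IsDyck

variable {w : List Bool} (hw : IsDyck w) {q : ℕ}
include hw

lemma getD_psi_readTime_eq_false_iff (hq : q < w.length) (d : Bool) :
    (psi w).getD (readTime w.length q) d = false ↔
      readTime w.length (partner w q) < readTime w.length q := by
  have hpq := (hw.matchPair_partner hq).lt_length
  rw [getD_psi (readTime_lt hq), zigR_zero_readTime hq, Bool.not_eq_false', decide_eq_true_iff]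
  constructor
  · rintro ⟨p', hp', hM⟩
    rwa [partner_eq_of_matchPair hM.symm,
      readTime_zigR_zero hw.even_length (hp'.trans (readTime_lt hq))]
  · intro h
    refine ⟨_, h, ?_⟩
    rw [zigR_zero_readTime hpq]
    exact (hw.matchPair_partner hq).symm

lemma getD_psi_readTime_eq_true_iff (hq : q < w.length) (d : Bool) :
    (psi w).getD (readTime w.length q) d = true ↔
      readTime w.length q < readTime w.length (partner w q) := by
  have hM := hw.matchPair_partner hq
  have hne : readTime w.length (partner w q) ≠ readTime w.length q :=
    fun h => hM.ne (readTime_injOn _ hM.lt_length hq h).symm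
  rw [← Bool.not_eq_false, hw.getD_psi_readTime_eq_false_iff hq]
  omega

/-- At time `2q` the unread steps are `[q, L - 1 - q]`, and at time `2q + 2` they are
`(q + 1, L - 1 - q)`. -/
lemma uStarD_two_mul_iff (hq : 2 * q + 2 ≤ w.length) :
    ((psi w ++ [false]).getD (2 * q) false = true ∧
        (psi w ++ [false]).getD (2 * q + 2) true = false) ↔ Matched w q (q + 1) := by
  rw [hw.matched_succ_iff_partner_mem_Ioc (R := w.length - 1 - q) (by omega) (by omega)]
  have hx := (hw.matchPair_partner (show q < w.length by omega)).lt_length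
  have hy := (hw.matchPair_partner (show q + 1 < w.length by omega)).lt_length
  refine and_congr ?_ ?_
  · rw [getD_psi_append_of_lt (by omega),
      ← readTime_of_two_mul_lt (L := w.length) (q := q) (by omega),
      hw.getD_psi_readTime_eq_true_iff (by omega), readTime_lt_readTime_iff_mem_Ioc (by omega) hx]
  · rcases (show 2 * q + 2 < w.length ∨ 2 * q + 2 = w.length by omega) with hlt | heq
    · rw [getD_psi_append_of_lt hlt,
        show 2 * q + 2 = 2 * (q + 1) by ring, ← readTime_of_two_mul_lt hlt,
        hw.getD_psi_readTime_eq_false_iff (by omega),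
        readTime_lt_readTime_succ_iff_notMem_Ioo hlt hy]
    · have hne := (hw.matchPair_partner (show q + 1 < w.length by omega)).ne
      rw [heq, getD_psi_append_length, Set.mem_Ioo]
      exact iff_of_true rfl (by omega)

/-- At time `2L - 2q - 3` the unread steps are `[L - 1 - q, q + 1]`, and at time `2L - 2q - 1`
they are `(L - 1 - q, q + 1)`. -/
lemma uStarD_odd_iff (hq : q + 1 < w.length) (hLq : w.length < 2 * q + 2) :
    ((psi w ++ [false]).getD (2 * w.length - (2 * q + 3)) false = true ∧
        (psi w ++ [false]).getD (2 * w.length - (2 * q + 3) + 2) true = false) ↔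
      Matched w q (q + 1) := by
  have hLq' : w.length ≤ 2 * q := by
    obtain ⟨n, hn⟩ := hw.even_length
    omega
  rw [hw.matched_succ_iff_partner_mem_Ico (l := w.length - 1 - q) hq (by omega)]
  have hx := (hw.matchPair_partner hq).lt_length
  have hy := (hw.matchPair_partner (show q < w.length by omega)).lt_length
  refine and_congr ?_ ?_
  · rw [getD_psi_append_of_lt (by omega),
      show 2 * w.length - (2 * q + 3) = 2 * w.length - (2 * (q + 1) + 1) by omega,
      ← readTime_of_le_two_mul (L := w.length) (q := q + 1) (by omega),
      hw.getD_psi_readTime_eq_true_iff hq,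
      readTime_succ_lt_readTime_iff_mem_Ico hLq' hq hx]
  · rw [getD_psi_append_of_lt (by omega),
      show 2 * w.length - (2 * q + 3) + 2 = 2 * w.length - (2 * q + 1) by omega,
      ← readTime_of_le_two_mul hLq',
      hw.getD_psi_readTime_eq_false_iff (by omega),
      readTime_lt_readTime_iff_notMem_Ioo hLq' (by omega) hy]

end IsDyck

/-- The time at which the first of the positions `j`, `j + 1` is read in the zigzag order on
a word of length `L`. -/
def peakTime (L j : ℕ) : ℕ := if 2 * j + 2 ≤ L then 2 * j else 2 * L - (2 * j + 3)

section peakTime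

variable {L i j : ℕ}

lemma peakTime_injOn (L : ℕ) : Set.InjOn (peakTime L) {j | j + 2 ≤ L} := by
  intro a ha b hb h
  simp only [Set.mem_ofPred_eq, peakTime] at ha hb h
  split_ifs at h <;> omega

lemma peakTime_add_two_le (hj : j + 2 ≤ L) : peakTime L j + 2 ≤ L := by
  unfold peakTime
  split_ifs <;> omega

lemma exists_peakTime_eq (hL : Even L) (hi : i + 2 ≤ L) : ∃ j, j + 2 ≤ L ∧ peakTime L j = i := by
  obtain ⟨n, rfl⟩ := hL
  obtain ⟨k, rfl | rfl⟩ := Nat.even_or_odd' i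
  · exact ⟨k, by omega, if_pos (by omega)⟩
  · exact ⟨n + n - k - 2, by omega, by rw [peakTime, if_neg (by omega)]; omega⟩

end peakTime

lemma IsDyck.uStarD_peakTime_iff {w : List Bool} (hw : IsDyck w) {j : ℕ}
    (hj : j + 2 ≤ w.length) :
    ((psi w ++ [false]).getD (peakTime w.length j) false = true ∧
        (psi w ++ [false]).getD (peakTime w.length j + 2) true = false) ↔
      Matched w j (j + 1) := by
  unfold peakTime
  split_ifs with h
  · exact hw.uStarD_two_mul_iff h
  · exact hw.uStarD_odd_iff (by omega) (by omega)

/-- for every Dyck word `D`, the number of peaks of `D` equals the number of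
occurrences of `u⋆d` in `Ψ(D)d` (i.e. `Ψ(D)` followed by one extra `d`). -/
theorem numPeaks_eq_numUStarD_psi (D : List Bool) (hD : IsDyck D) :
    numPeaks D = numUStarD (psi D ++ [false]) := by
  have hlen : (psi D ++ [false]).length = D.length + 1 := by simp [length_psi]
  have himage : {i | i + 3 ≤ (psi D ++ [false]).length ∧ (psi D ++ [false]).getD i false = true ∧
        (psi D ++ [false]).getD (i + 2) true = false} =
      peakTime D.length ''
        {j | j + 2 ≤ D.length ∧ D.getD j false = true ∧ D.getD (j + 1) true = false} := by
    ext i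
    simp only [Set.mem_ofPred_eq, Set.mem_image, hlen, ← matched_succ_iff]
    constructor
    · rintro ⟨hi, hud⟩
      obtain ⟨j, hj, rfl⟩ := exists_peakTime_eq hD.even_length (i := i) (by omega)
      exact ⟨j, (hD.uStarD_peakTime_iff hj).1 hud, rfl⟩
    · rintro ⟨j, hpeak, rfl⟩
      have hj := (matched_succ_iff.1 hpeak).1
      exact ⟨by linarith [peakTime_add_two_le hj], (hD.uStarD_peakTime_iff hj).2 hpeak⟩
  rw [numPeaks, numUStarD, himage, ((peakTime_injOn _).mono fun j hj => hj.1).ncard_image]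

end DyckBij
end
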